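/- Let A > 0, c ∈ ℝ, and x ∈ (−A, A). Then the principal value integral lim_{ε→0⁺} ∫_{{y ∈ (−A,A) : |y − x| > ε}} (y² + A²/2 + c)·√(A² − y²)/(x − y) dy exists and equals π·(x³ + c·x). -/

import Mathlib

open Real Set Filter Topology MeasureTheory

/-!
Since `y² + A²/2 + c = (y² - x²) + B` with `B = x² + A²/2 + c`, the integrand is
`-(x + y) √(A² - y²) + B √(A² - y²) / (x - y)`. Both terms have elementary primitives, the
second one up to the singular term `-√(A² - x²) log |y - x|`. In the punctured integral the
logarithms at `x ± ε` cancel, so the principal value is read off the regular parts at `±A`: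
`-π A² x / 2` from the first term and `π x` (the Hilbert transform of the semicircle) from the
second, and `-π A² x / 2 + B π x = π (x³ + c x)`.
-/

lemma setOf_mem_Ioo_and_lt_abs_sub_eq_union {a b x ε : ℝ} (hax : a ≤ x) (hxb : x ≤ b)
    (hε : 0 ≤ ε) :
    {y : ℝ | y ∈ Ioo a b ∧ ε < |y - x|} = Ioo a (x - ε) ∪ Ioo (x + ε) b := by
  ext y
  simp only [mem_ofPred_eq, mem_Ioo, mem_union, lt_abs]
  constructor
  · rintro ⟨⟨hay, hyb⟩, hright | hleft⟩
    · exact Or.inr ⟨by linarith, hyb⟩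
    · exact Or.inl ⟨hay, by linarith⟩
  · rintro (⟨hay, hyx⟩ | ⟨hxy, hyb⟩)
    · exact ⟨⟨hay, by linarith⟩, Or.inr (by linarith)⟩
    · exact ⟨⟨by linarith, hyb⟩, Or.inl (by linarith)⟩

lemma integral_Ioo_eq_sub_of_hasDerivAt {F g : ℝ → ℝ} {u v : ℝ} (huv : u ≤ v)
    (hF : ContinuousOn F (Icc u v)) (hderiv : ∀ y ∈ Ioo u v, HasDerivAt F (g y) y)
    (hg : ContinuousOn g (Icc u v)) :
    ∫ y in Ioo u v, g y = F v - F u := by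
  rw [← integral_Ioc_eq_integral_Ioo, ← intervalIntegral.integral_of_le huv]
  exact intervalIntegral.integral_eq_sub_of_hasDerivAt_of_le huv hF hderiv
    (hg.intervalIntegrable_of_Icc huv)

section PrincipalValue

variable {a b x K : ℝ} {H g : ℝ → ℝ}

-- Mathlib's `log` is even (`log (-z) = log z`), so `log (t - x)` is `log |t - x|` on both sides.
lemma integral_punctured_eq_of_hasDerivAt_add_mul_log {ε : ℝ} (hε : 0 < ε) (hεa : ε < x - a)
    (hεb : ε < b - x) (hH : ContinuousOn H (Icc a b))
    (hderiv : ∀ y ∈ Ioo a b, y ≠ x → HasDerivAt (fun t => H t + K * log (t - x)) (g y) y)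
    (hg : ContinuousOn g (Icc a b \ {x})) :
    ∫ y in {y | y ∈ Ioo a b ∧ ε < |y - x|}, g y
      = H b - H a + K * (log (b - x) - log (x - a)) + (H (x - ε) - H (x + ε)) := by
  set F : ℝ → ℝ := fun t => H t + K * log (t - x) with hF
  have hsub : ∀ u v, a ≤ u → v ≤ b → x ∉ Icc u v → Icc u v ⊆ Icc a b \ {x} :=
    fun u v hau hvb hx y hy => ⟨⟨hau.trans hy.1, hy.2.trans hvb⟩, fun h => hx (h ▸ hy)⟩
  have hint : ∀ u v, a ≤ u → v ≤ b → x ∉ Icc u v → IntegrableOn g (Ioo u v) :=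
    fun u v hau hvb hx =>
      ((hg.mono (hsub u v hau hvb hx)).integrableOn_Icc).mono_set Ioo_subset_Icc_self
  have hside : ∀ u v, a ≤ u → u ≤ v → v ≤ b → x ∉ Icc u v →
      ∫ y in Ioo u v, g y = F v - F u := by
    intro u v hau huv hvb hx
    have huvx := hsub u v hau hvb hx
    refine integral_Ioo_eq_sub_of_hasDerivAt huv ?_ ?_ (hg.mono huvx)
    · refine (hH.mono fun y hy => (huvx hy).1).add (continuousOn_const.mul ?_)
      exact (continuousOn_id.sub continuousOn_const).log fun y hy => sub_ne_zero.2 (huvx hy).2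
    · exact fun y hy => hderiv y ⟨hau.trans_lt hy.1, hy.2.trans_le hvb⟩
        fun h => hx (h ▸ Ioo_subset_Icc_self hy)
  rw [setOf_mem_Ioo_and_lt_abs_sub_eq_union (by linarith) (by linarith) hε.le,
    setIntegral_union (disjoint_left.2 fun y hy hy' => by linarith [hy.2, hy'.1])
      measurableSet_Ioo (hint a (x - ε) le_rfl (by linarith) fun h => by linarith [h.2])
      (hint (x + ε) b (by linarith) le_rfl fun h => by linarith [h.1]),
    hside a (x - ε) le_rfl (by linarith) (by linarith) (fun h => by linarith [h.2]),
    hside (x + ε) b (by linarith) (by linarith) le_rfl (fun h => by linarith [h.1])]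
  simp only [hF, show x - ε - x = -ε by ring, show a - x = -(x - a) by ring,
    add_sub_cancel_left, log_neg_eq_log]
  ring

theorem tendsto_integral_punctured_of_hasDerivAt_add_mul_log (hax : a < x) (hxb : x < b)
    (hH : ContinuousOn H (Icc a b))
    (hderiv : ∀ y ∈ Ioo a b, y ≠ x → HasDerivAt (fun t => H t + K * log (t - x)) (g y) y)
    (hg : ContinuousOn g (Icc a b \ {x})) :
    Tendsto (fun ε => ∫ y in {y | y ∈ Ioo a b ∧ ε < |y - x|}, g y) (𝓝[>] 0)
      (𝓝 (H b - H a + K * (log (b - x) - log (x - a)))) := by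
  have hHx : ContinuousAt H x := hH.continuousAt (Icc_mem_nhds hax hxb)
  have hsym : Tendsto (fun ε => H (x - ε) - H (x + ε)) (𝓝[>] 0) (𝓝 0) := by
    have hl : ContinuousAt (fun ε => H (x - ε)) 0 := hHx.comp_of_eq (by fun_prop) (by simp)
    have hr : ContinuousAt (fun ε => H (x + ε)) 0 := hHx.comp_of_eq (by fun_prop) (by simp)
    simpa using (hl.tendsto.sub hr.tendsto).mono_left nhdsWithin_le_nhds
  have hlim := hsym.const_add (H b - H a + K * (log (b - x) - log (x - a)))
  rw [add_zero] at hlim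
  refine hlim.congr' ?_
  filter_upwards [Ioo_mem_nhdsGT (lt_min (sub_pos.2 hax) (sub_pos.2 hxb))] with ε ⟨hε, hεx⟩
  exact (integral_punctured_eq_of_hasDerivAt_add_mul_log hε (hεx.trans_le (min_le_left _ _))
    (hεx.trans_le (min_le_right _ _)) hH hderiv hg).symm

end PrincipalValue

lemma hasDerivAt_sqrt_sq_sub_sq {A y : ℝ} (hy : y ^ 2 < A ^ 2) :
    HasDerivAt (fun t => √(A ^ 2 - t ^ 2)) (-y / √(A ^ 2 - y ^ 2)) y := by
  have hpos : 0 < A ^ 2 - y ^ 2 := sub_pos.2 hy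
  refine (((hasDerivAt_pow 2 y).const_sub (A ^ 2)).sqrt hpos.ne').congr_deriv ?_
  have := (sqrt_pos.2 hpos).ne'
  field_simp
  ring

lemma hasDerivAt_arcsin_div {A y : ℝ} (hy : |y| < A) :
    HasDerivAt (fun t => arcsin (t / A)) (1 / √(A ^ 2 - y ^ 2)) y := by
  have hA : 0 < A := (abs_nonneg y).trans_lt hy
  have hyA : |y / A| < 1 := by rwa [abs_div, abs_of_pos hA, div_lt_one hA]
  have := (hasDerivAt_arcsin (abs_lt.1 hyA).1.ne' (abs_lt.1 hyA).2.ne).comp y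
    ((hasDerivAt_id y).div_const A)
  refine this.congr_deriv ?_
  rw [show 1 - (y / A) ^ 2 = (A ^ 2 - y ^ 2) / A ^ 2 by field_simp, sqrt_div' _ (sq_nonneg A),
    sqrt_sq hA.le]
  field_simp

lemma sub_mul_add_sqrt_mul_sqrt_pos {A x y : ℝ} (hx : |x| < A) (hy : |y| ≤ A) :
    0 < A ^ 2 - x * y + √(A ^ 2 - x ^ 2) * √(A ^ 2 - y ^ 2) := by
  have hxy : x * y < A ^ 2 := calc
    x * y ≤ |x| * |y| := by rw [← abs_mul]; exact le_abs_self _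
    _ ≤ |x| * A := by gcongr
    _ < A ^ 2 := by nlinarith [abs_nonneg x]
  have := mul_nonneg (sqrt_nonneg (A ^ 2 - x ^ 2)) (sqrt_nonneg (A ^ 2 - y ^ 2))
  linarith

noncomputable def sqrtPolyPrimitive (A x y : ℝ) : ℝ :=
  (A ^ 2 - y ^ 2) * √(A ^ 2 - y ^ 2) / 3
    - x * (y / 2 * √(A ^ 2 - y ^ 2) + A ^ 2 / 2 * arcsin (y / A))

noncomputable def sqrtCauchyPrimitive (A x y : ℝ) : ℝ :=
  x * arcsin (y / A) - √(A ^ 2 - y ^ 2) +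
    √(A ^ 2 - x ^ 2) * log (A ^ 2 - x * y + √(A ^ 2 - x ^ 2) * √(A ^ 2 - y ^ 2))

lemma hasDerivAt_sqrtPolyPrimitive {A x y : ℝ} (hy : |y| < A) :
    HasDerivAt (sqrtPolyPrimitive A x) (-(x + y) * √(A ^ 2 - y ^ 2)) y := by
  have hA : 0 < A := (abs_nonneg y).trans_lt hy
  have hy2 : y ^ 2 < A ^ 2 := sq_lt_sq' (abs_lt.1 hy).1 (abs_lt.1 hy).2
  have hg : √(A ^ 2 - y ^ 2) ≠ 0 := (sqrt_pos.2 (sub_pos.2 hy2)).ne'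
  have hsqrt := hasDerivAt_sqrt_sq_sub_sq hy2
  have := ((((hasDerivAt_pow 2 y).const_sub (A ^ 2)).mul hsqrt).div_const 3).sub
    (((((hasDerivAt_id' y).div_const 2).mul hsqrt).add
      ((hasDerivAt_arcsin_div hy).const_mul (A ^ 2 / 2))).const_mul x)
  refine this.congr_deriv ?_
  field_simp
  rw [sq_sqrt (sub_pos.2 hy2).le]
  ring

lemma hasDerivAt_sqrtCauchyPrimitive_sub_log {A x y : ℝ} (hx : |x| < A) (hy : |y| < A)
    (hyx : y ≠ x) :
    HasDerivAt (fun t => sqrtCauchyPrimitive A x t - √(A ^ 2 - x ^ 2) * log (t - x))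
      (√(A ^ 2 - y ^ 2) / (x - y)) y := by
  have hA : 0 < A := (abs_nonneg y).trans_lt hy
  have hy2 : y ^ 2 < A ^ 2 := sq_lt_sq' (abs_lt.1 hy).1 (abs_lt.1 hy).2
  have hx2 : x ^ 2 < A ^ 2 := sq_lt_sq' (abs_lt.1 hx).1 (abs_lt.1 hx).2
  have hg : √(A ^ 2 - y ^ 2) ≠ 0 := (sqrt_pos.2 (sub_pos.2 hy2)).ne'
  have hg2 : √(A ^ 2 - y ^ 2) ^ 2 = A ^ 2 - y ^ 2 := sq_sqrt (sub_pos.2 hy2).le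
  have hs2 : √(A ^ 2 - x ^ 2) ^ 2 = A ^ 2 - x ^ 2 := sq_sqrt (sub_pos.2 hx2).le
  have hu := (sub_mul_add_sqrt_mul_sqrt_pos hx hy.le).ne'
  have hyx' : y - x ≠ 0 := sub_ne_zero.2 hyx
  have hsqrt := hasDerivAt_sqrt_sq_sub_sq hy2
  -- The logarithmic term of the primitive carries the pole `1 / (y - x)`.
  have hlog : HasDerivAt (fun t => log (A ^ 2 - x * t + √(A ^ 2 - x ^ 2) * √(A ^ 2 - t ^ 2)))
      (1 / (y - x) - √(A ^ 2 - x ^ 2) / ((y - x) * √(A ^ 2 - y ^ 2))) y := by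
    have hinner := (((hasDerivAt_id' y).const_mul x).const_sub (A ^ 2)).add
      (hsqrt.const_mul √(A ^ 2 - x ^ 2))
    refine (hinner.log hu).congr_deriv ?_
    simp only [Pi.add_apply]
    field_simp
    linear_combination √(A ^ 2 - y ^ 2) * hs2 - √(A ^ 2 - x ^ 2) * hg2
  have := ((((hasDerivAt_arcsin_div hy).const_mul x).sub hsqrt).add
    (hlog.const_mul √(A ^ 2 - x ^ 2))).sub
    ((((hasDerivAt_id' y).sub_const x).log hyx').const_mul √(A ^ 2 - x ^ 2))
  refine this.congr_deriv ?_
  field_simp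
  linear_combination (y - x) * hs2 + (x - y) * hg2

lemma continuous_sqrtPolyPrimitive (A x : ℝ) : Continuous (sqrtPolyPrimitive A x) := by
  unfold sqrtPolyPrimitive
  fun_prop

lemma continuousOn_sqrtCauchyPrimitive {A x : ℝ} (hx : |x| < A) :
    ContinuousOn (sqrtCauchyPrimitive A x) (Icc (-A) A) := by
  have hlog : ContinuousOn
      (fun y => log (A ^ 2 - x * y + √(A ^ 2 - x ^ 2) * √(A ^ 2 - y ^ 2))) (Icc (-A) A) :=
    ContinuousOn.log (by fun_prop) fun y hy =>
      (sub_mul_add_sqrt_mul_sqrt_pos hx (abs_le.2 hy)).ne'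
  unfold sqrtCauchyPrimitive
  exact (by fun_prop : Continuous fun y => x * arcsin (y / A) - √(A ^ 2 - y ^ 2)).continuousOn.add
    (continuousOn_const.mul hlog)

lemma sqrtPolyPrimitive_sub_sqrtPolyPrimitive_neg {A : ℝ} (x : ℝ) (hA : A ≠ 0) :
    sqrtPolyPrimitive A x A - sqrtPolyPrimitive A x (-A) = -(π * A ^ 2 * x / 2) := by
  simp only [sqrtPolyPrimitive, div_self hA, neg_div, arcsin_one, arcsin_neg_one, neg_sq,
    sub_self, sqrt_zero, mul_zero, zero_div]
  ring

lemma sqrtCauchyPrimitive_sub_sqrtCauchyPrimitive_neg {A x : ℝ} (hx : |x| < A) :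
    sqrtCauchyPrimitive A x A - sqrtCauchyPrimitive A x (-A)
      - √(A ^ 2 - x ^ 2) * (log (A - x) - log (x + A)) = π * x := by
  obtain ⟨hxl, hxr⟩ := abs_lt.1 hx
  have hA : 0 < A := (abs_nonneg x).trans_lt hx
  simp only [sqrtCauchyPrimitive, div_self hA.ne', neg_div, arcsin_one, arcsin_neg_one, neg_sq,
    sub_self, sqrt_zero, mul_zero, add_zero]
  rw [show A ^ 2 - x * A = A * (A - x) by ring, show A ^ 2 - x * -A = A * (x + A) by ring,
    log_mul hA.ne' (by linarith), log_mul hA.ne' (by linarith)]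
  ring

theorem stmt_19_general (A c : ℝ) (x : ℝ) (hx : x ∈ Set.Ioo (-A) A) :
    Tendsto (fun ε : ℝ =>
        ∫ y in {y : ℝ | y ∈ Set.Ioo (-A) A ∧ ε < |y - x|},
          (y ^ 2 + A ^ 2 / 2 + c) * Real.sqrt (A ^ 2 - y ^ 2) / (x - y))
      (nhdsWithin 0 (Set.Ioi 0)) (nhds (Real.pi * (x ^ 3 + c * x))) := by
  have hxA : |x| < A := abs_lt.2 hx
  set B := x ^ 2 + A ^ 2 / 2 + c
  have hderiv : ∀ y ∈ Ioo (-A) A, y ≠ x → HasDerivAt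
      (fun t => (sqrtPolyPrimitive A x t + B * sqrtCauchyPrimitive A x t)
        + -(B * √(A ^ 2 - x ^ 2)) * log (t - x))
      ((y ^ 2 + A ^ 2 / 2 + c) * √(A ^ 2 - y ^ 2) / (x - y)) y := by
    intro y hy hyx
    have hy' : |y| < A := abs_lt.2 hy
    have h := (hasDerivAt_sqrtPolyPrimitive (x := x) hy').add
      ((hasDerivAt_sqrtCauchyPrimitive_sub_log hxA hy' hyx).const_mul B)
    refine (h.congr_of_eventuallyEq (.of_forall fun t => ?_)).congr_deriv ?_
    · simp only [Pi.add_apply]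
      ring
    · field_simp [sub_ne_zero.2 hyx.symm]
      ring
  have hpv := tendsto_integral_punctured_of_hasDerivAt_add_mul_log hx.1 hx.2
    (H := fun t => sqrtPolyPrimitive A x t + B * sqrtCauchyPrimitive A x t)
    ((continuous_sqrtPolyPrimitive A x).continuousOn.add
      (continuousOn_const.mul (continuousOn_sqrtCauchyPrimitive hxA))) hderiv
    (ContinuousOn.div (by fun_prop) (by fun_prop) fun y hy => sub_ne_zero.2 (Ne.symm hy.2))
  convert hpv using 2
  rw [sub_neg_eq_add]
  have hA : A ≠ 0 := ((abs_nonneg x).trans_lt hxA).ne'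
  linear_combination -sqrtPolyPrimitive_sub_sqrtPolyPrimitive_neg x hA
    - B * sqrtCauchyPrimitive_sub_sqrtCauchyPrimitive_neg hxA

/-- the principal value integral
`p.v. ∫_{-A}^{A} (y² + A²/2 + c)√(A² - y²)/(x - y) dy` exists for `x ∈ (-A, A)` and
equals `π (x³ + c x)` (the cut equation for the quartic potential). -/
theorem stmt_19 (A c : ℝ) (hA : 0 < A) (x : ℝ) (hx : x ∈ Set.Ioo (-A) A) :
    Tendsto (fun ε : ℝ =>
        ∫ y in {y : ℝ | y ∈ Set.Ioo (-A) A ∧ ε < |y - x|},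
          (y ^ 2 + A ^ 2 / 2 + c) * Real.sqrt (A ^ 2 - y ^ 2) / (x - y))
      (nhdsWithin 0 (Set.Ioi 0)) (nhds (Real.pi * (x ^ 3 + c * x))) :=
  stmt_19_general A c x hx
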